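/- arXiv:1007.3322 — 3 statements merged into one kernel-verified Lean document; each statement's English description precedes it below -/
import Mathlib

section
/- Let β ≥ 0, let x be a point of the Euclidean plane, and let W be a set of points contained in the closed disc of radius β + 1 centred at x such that every point w ∈ W has at most 4 points of W \ {w} within (closed) distance 1 of it. Then W is finite and card W ≤ 20(β + 2)². -/
/-!
The closed discs of radius `1/2` around the points of `W` cover no point of the plane more than
`5` times, since two centres whose discs share a point are at distance at most `1`. They all lie
in the disc of radius `β + 3/2` around `x`, so comparing areas gives `|s| / 4 ≤ 5 (β + 3/2)²` for
every finite `s ⊆ W`; this bound on finite subsets also forces `W` to be finite.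
-/

open Metric Set

theorem Set.finite_and_ncard_le_of_forall_finset_card_le {α : Type*} {W : Set α} {c : ℝ}
    (h : ∀ s : Finset α, ↑s ⊆ W → (s.card : ℝ) ≤ c) : W.Finite ∧ (W.ncard : ℝ) ≤ c := by
  have hfin : W.Finite := by
    by_contra hinf
    obtain ⟨s, hsW, hs⟩ := Set.Infinite.exists_subset_card_eq hinf (⌈c⌉₊ + 1)
    have hsc := h s hsW
    rw [hs, Nat.cast_add_one] at hsc
    linarith [Nat.le_ceil c]
  exact ⟨hfin, by simpa [ncard_eq_toFinset_card W hfin] using h hfin.toFinset (by simp)⟩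

open MeasureTheory Finset in
theorem MeasureTheory.sum_measure_le_mul_measure_biUnion {α ι : Type*} [MeasurableSpace α]
    (μ : Measure α) (s : Finset ι) {A : ι → Set α} (hA : ∀ i ∈ s, MeasurableSet (A i)) {m : ℕ}
    (hmult : ∀ y, {i ∈ (s : Set ι) | y ∈ A i}.encard ≤ m) :
    ∑ i ∈ s, μ (A i) ≤ m * μ (⋃ i ∈ s, A i) := by
  classical
  have hU : MeasurableSet (⋃ i ∈ s, A i) := s.measurableSet_biUnion hA
  have hpt (y : α) :
      ∑ i ∈ s, (A i).indicator 1 y ≤ (m : ENNReal) * (⋃ i ∈ s, A i).indicator 1 y := by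
    by_cases hy : y ∈ ⋃ i ∈ s, A i
    · have hcard : #{i ∈ s | y ∈ A i} ≤ m := by
        rw [← ENat.natCast_le_natCast, ← encard_coe_eq_coe_finsetCard, coe_filter]
        exact hmult y
      simp only [indicator_of_mem hy, indicator_apply, Pi.one_apply, sum_boole, mul_one]
      exact_mod_cast hcard
    · rw [sum_eq_zero fun i hi => indicator_of_notMem (fun h => hy (mem_biUnion hi h)) _]
      exact bot_le
  calc ∑ i ∈ s, μ (A i) = ∫⁻ y, ∑ i ∈ s, (A i).indicator 1 y ∂μ := by
        rw [lintegral_finsetSum _ fun i hi => measurable_one.indicator (hA i hi)]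
        exact sum_congr rfl fun i hi => (lintegral_indicator_one (hA i hi)).symm
    _ ≤ ∫⁻ y, m * (⋃ i ∈ s, A i).indicator 1 y ∂μ := lintegral_mono hpt
    _ = m * μ (⋃ i ∈ s, A i) := by
        rw [lintegral_const_mul _ (measurable_one.indicator hU), lintegral_indicator_one hU]

theorem Metric.encard_inter_closedBall_le_succ {X : Type*} [PseudoMetricSpace X] {W : Set X}
    {r : ℝ} {n : ℕ} (h : ∀ w ∈ W, ((W \ {w}) ∩ closedBall w (2 * r)).encard ≤ n) (y : X) :
    (W ∩ closedBall y r).encard ≤ n + 1 := by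
  obtain hempty | ⟨w, hwW, hwy⟩ := (W ∩ closedBall y r).eq_empty_or_nonempty
  · simp [hempty]
  have hsub : W ∩ closedBall y r ⊆ insert w ((W \ {w}) ∩ closedBall w (2 * r)) := by
    rintro v ⟨hvW, hvy⟩
    rcases eq_or_ne v w with rfl | hvw
    · exact mem_insert _ _
    refine mem_insert_of_mem _ ⟨⟨hvW, hvw⟩, ?_⟩
    rw [mem_closedBall] at hvy hwy ⊢
    linarith [dist_triangle_right v w y]
  calc (W ∩ closedBall y r).encard ≤ ((W \ {w}) ∩ closedBall w (2 * r)).encard + 1 :=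
        (encard_le_encard hsub).trans (encard_insert_le _ _)
    _ ≤ n + 1 := by gcongr; exact h w hwW

open MeasureTheory Module in
theorem Finset.card_mul_pow_le_of_encard_inter_closedBall_le {E : Type*} [NormedAddCommGroup E]
    [NormedSpace ℝ E] [FiniteDimensional ℝ E] (s : Finset E) {x : E} {R r : ℝ} (hR : 0 ≤ R)
    (hr : 0 < r) (hs : ∀ w ∈ s, w ∈ closedBall x R) {m : ℕ}
    (hmult : ∀ y, ((s : Set E) ∩ closedBall y r).encard ≤ m) :
    (s.card : ℝ) * r ^ finrank ℝ E ≤ m * (R + r) ^ finrank ℝ E := by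
  borelize E
  let μ : Measure E := Measure.addHaar
  have hU : (⋃ w ∈ s, closedBall w r) ⊆ closedBall x (R + r) := by
    refine iUnion₂_subset fun w hw => closedBall_subset_closedBall' ?_
    linarith [mem_closedBall.mp (hs w hw)]
  have key : ∑ w ∈ s, μ (closedBall w r) ≤ m * μ (closedBall x (R + r)) :=
    (sum_measure_le_mul_measure_biUnion μ s (fun w _ => measurableSet_closedBall)
      fun y => by simp_rw [mem_closedBall_comm]; exact hmult y).trans (by gcongr)
  simp only [Measure.addHaar_closedBall' μ _ hr.le,
    Measure.addHaar_closedBall' μ _ (by linarith : 0 ≤ R + r), sum_const, nsmul_eq_mul,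
    ← mul_assoc] at key
  rw [ENNReal.mul_le_mul_iff_left (measure_closedBall_pos μ 0 one_pos).ne'
    measure_closedBall_lt_top.ne, ← ENNReal.ofReal_natCast, ← ENNReal.ofReal_natCast m,
    ← ENNReal.ofReal_mul (by positivity), ← ENNReal.ofReal_mul (by positivity),
    ENNReal.ofReal_le_ofReal_iff (by positivity)] at key
  exact key

/-- The bound `|W| ≤ 20(β + 2)²` from the proof of Lemma 4 of the paper: if `W` lies in
the closed disc of radius `β + 1` around `x` and every `w ∈ W` has at most `4` points of
`W \ {w}` within closed distance `1`, then `W` is finite with `|W| ≤ 20(β + 2)²`. -/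
theorem stmt_3 (β : ℝ) (hβ : 0 ≤ β) (x : EuclideanSpace ℝ (Fin 2))
    (W : Set (EuclideanSpace ℝ (Fin 2))) (hW : W ⊆ closedBall x (β + 1))
    (h : ∀ w ∈ W, ((W \ {w}) ∩ closedBall w 1).encard ≤ (4 : ℕ∞)) :
    W.Finite ∧ (W.ncard : ℝ) ≤ 20 * (β + 2) ^ 2 := by
  have hmult (y : EuclideanSpace ℝ (Fin 2)) : (W ∩ closedBall y (1 / 2)).encard ≤ (4 : ℕ) + 1 :=
    encard_inter_closedBall_le_succ (by norm_num; exact h) y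
  refine finite_and_ncard_le_of_forall_finset_card_le fun s hs => ?_
  have hpack := s.card_mul_pow_le_of_encard_inter_closedBall_le (by linarith : 0 ≤ β + 1)
    (by norm_num : (0 : ℝ) < 1 / 2) (fun w hw => hW (hs hw)) (m := 5)
    fun y => (encard_le_encard (inter_subset_inter_left _ hs)).trans (hmult y)
  rw [finrank_euclideanSpace_fin] at hpack
  nlinarith
end

section
/- Let δ : (0,1)² → ℝ be continuous with δ(p, q) > 0 for all (p, q) ∈ (0,1)². Let (θₙ)_{n ∈ ℕ} be a family of functions θₙ : ℝ² → ℝ, each differentiable at every point of (0,1)², such that for every n and every (p, q) ∈ (0,1)² the partial derivatives satisfy ∂θₙ/∂p (p, q) ≥ 0 and ∂θₙ/∂q (p, q) ≥ δ(p, q) · ∂θₙ/∂p (p, q). Then for every (p*, q*) ∈ (0,1)² there exist ε > 0 and κ > 0 with p* − ε, p* + ε, q* − κ, q* + κ all in (0,1), such that for every n, θₙ(p* + ε, q* − κ) ≤ θₙ(p* − ε, q* + κ). -/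
open Set

/-- The analytic step in the proof of Theorem 1 of the paper: given a continuous,
strictly positive function `δ` on the open unit square and a family `θₙ` of functions
differentiable on the square with `∂θₙ/∂p ≥ 0` and `∂θₙ/∂q ≥ δ(p,q) · ∂θₙ/∂p` there,
around any `(p*, q*)` in the square one can find `ε, κ > 0` with
`θₙ(p* + ε, q* − κ) ≤ θₙ(p* − ε, q* + κ)` for every `n`. -/
theorem stmt_6 (δ : ℝ × ℝ → ℝ)
    (hδcont : ContinuousOn δ (Ioo (0 : ℝ) 1 ×ˢ Ioo (0 : ℝ) 1))
    (hδpos : ∀ u ∈ Ioo (0 : ℝ) 1 ×ˢ Ioo (0 : ℝ) 1, 0 < δ u)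
    (θ : ℕ → ℝ × ℝ → ℝ)
    (hθ : ∀ n, ∀ u ∈ Ioo (0 : ℝ) 1 ×ˢ Ioo (0 : ℝ) 1, DifferentiableAt ℝ (θ n) u)
    (hp : ∀ n, ∀ u ∈ Ioo (0 : ℝ) 1 ×ˢ Ioo (0 : ℝ) 1, 0 ≤ fderiv ℝ (θ n) u (1, 0))
    (hq : ∀ n, ∀ u ∈ Ioo (0 : ℝ) 1 ×ˢ Ioo (0 : ℝ) 1,
      δ u * fderiv ℝ (θ n) u (1, 0) ≤ fderiv ℝ (θ n) u (0, 1))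
    (pstar qstar : ℝ) (hpstar : pstar ∈ Ioo (0 : ℝ) 1) (hqstar : qstar ∈ Ioo (0 : ℝ) 1) :
    ∃ ε > 0, ∃ κ > 0,
      pstar - ε ∈ Ioo (0 : ℝ) 1 ∧ pstar + ε ∈ Ioo (0 : ℝ) 1 ∧
      qstar - κ ∈ Ioo (0 : ℝ) 1 ∧ qstar + κ ∈ Ioo (0 : ℝ) 1 ∧
      ∀ n, θ n (pstar + ε, qstar - κ) ≤ θ n (pstar - ε, qstar + κ) := by
  obtain ⟨hp0, hp1⟩ := hpstar
  obtain ⟨hq0, hq1⟩ := hqstar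
  set r : ℝ := min (min pstar (1 - pstar)) (min qstar (1 - qstar)) / 2 with hrdef
  have hr1 : r ≤ pstar / 2 := by
    have : min (min pstar (1 - pstar)) (min qstar (1 - qstar)) ≤ pstar :=
      (min_le_left _ _).trans (min_le_left _ _)
    linarith
  have hr2 : r ≤ (1 - pstar) / 2 := by
    have : min (min pstar (1 - pstar)) (min qstar (1 - qstar)) ≤ 1 - pstar :=
      (min_le_left _ _).trans (min_le_right _ _)
    linarith
  have hr3 : r ≤ qstar / 2 := by
    have : min (min pstar (1 - pstar)) (min qstar (1 - qstar)) ≤ qstar :=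
      (min_le_right _ _).trans (min_le_left _ _)
    linarith
  have hr4 : r ≤ (1 - qstar) / 2 := by
    have : min (min pstar (1 - pstar)) (min qstar (1 - qstar)) ≤ 1 - qstar :=
      (min_le_right _ _).trans (min_le_right _ _)
    linarith
  have hrpos : 0 < r := by
    have : 0 < min (min pstar (1 - pstar)) (min qstar (1 - qstar)) :=
      lt_min (lt_min hp0 (by linarith)) (lt_min hq0 (by linarith))
    linarith
  -- the compact box
  set K : Set (ℝ × ℝ) := Icc (pstar - r) (pstar + r) ×ˢ Icc (qstar - r) (qstar + r) with hKdef
  have hKsub : K ⊆ Ioo (0 : ℝ) 1 ×ˢ Ioo (0 : ℝ) 1 := by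
    rintro ⟨x, y⟩ ⟨⟨hx1, hx2⟩, ⟨hy1, hy2⟩⟩
    exact ⟨⟨by linarith, by linarith⟩, ⟨by linarith, by linarith⟩⟩
  have hKcompact : IsCompact K := (isCompact_Icc).prod isCompact_Icc
  have hKne : K.Nonempty :=
    ⟨(pstar, qstar), ⟨⟨by linarith, by linarith⟩, ⟨by linarith, by linarith⟩⟩⟩
  obtain ⟨z, hzK, hzmin⟩ := hKcompact.exists_isMinOn hKne (hδcont.mono hKsub)
  set δ₀ : ℝ := δ z with hδ₀def
  have hδ₀pos : 0 < δ₀ := hδpos z (hKsub hzK)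
  -- choose ε and κ
  set ε : ℝ := min r (r * δ₀) with hεdef
  have hεpos : 0 < ε := lt_min hrpos (mul_pos hrpos hδ₀pos)
  have hεr : ε ≤ r := min_le_left _ _
  have hεδ : ε ≤ r * δ₀ := min_le_right _ _
  refine ⟨ε, hεpos, r, hrpos, ⟨by linarith, by linarith⟩, ⟨by linarith, by linarith⟩,
    ⟨by linarith, by linarith⟩, ⟨by linarith, by linarith⟩, ?_⟩
  intro n
  -- the path from (p*+ε, q*-r) to (p*-ε, q*+r)
  set v : ℝ × ℝ := (-(2 * ε), 2 * r) with hvdef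
  set γ : ℝ → ℝ × ℝ := fun t => (pstar + ε, qstar - r) + t • v with hγdef
  have hγmem : ∀ t ∈ Icc (0 : ℝ) 1, γ t ∈ K := by
    rintro t ⟨ht0, ht1⟩
    have h1 : 0 ≤ ε * t := mul_nonneg hεpos.le ht0
    have h2 : ε * t ≤ ε := by nlinarith
    have h3 : 0 ≤ r * t := mul_nonneg hrpos.le ht0
    have h4 : r * t ≤ r := by nlinarith
    simp only [hγdef, hvdef, Prod.smul_mk, Prod.mk_add_mk, hKdef, mem_prod, mem_Icc,
      smul_eq_mul]
    constructor <;> constructor <;> nlinarith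
  have hγderiv : ∀ t : ℝ, HasDerivAt γ v t := by
    intro t
    have h : HasDerivAt (fun s : ℝ => s • v) ((1 : ℝ) • v) t := (hasDerivAt_id t).smul_const v
    simpa [hγdef] using h.const_add (pstar + ε, qstar - r)
  have hvdecomp : v = (-(2 * ε)) • ((1 : ℝ), (0 : ℝ)) + (2 * r) • ((0 : ℝ), (1 : ℝ)) := by
    simp [hvdef, Prod.ext_iff]
  have hDnonneg : ∀ t ∈ Icc (0 : ℝ) 1, 0 ≤ fderiv ℝ (θ n) (γ t) v := by
    intro t ht
    have hmem := hKsub (hγmem t ht)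
    have hA : 0 ≤ fderiv ℝ (θ n) (γ t) (1, 0) := hp n _ hmem
    have hB : δ (γ t) * fderiv ℝ (θ n) (γ t) (1, 0) ≤ fderiv ℝ (θ n) (γ t) (0, 1) :=
      hq n _ hmem
    have hδt : δ₀ ≤ δ (γ t) := hzmin (hγmem t ht)
    rw [hvdecomp, map_add, map_smul, map_smul]
    simp only [smul_eq_mul]
    nlinarith [mul_le_mul_of_nonneg_right hδt hA]
  -- g = θ n ∘ γ is monotone on [0,1]
  have hg : ∀ t ∈ Icc (0 : ℝ) 1, HasDerivAt (θ n ∘ γ) (fderiv ℝ (θ n) (γ t) v) t := by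
    intro t ht
    exact ((hθ n _ (hKsub (hγmem t ht))).hasFDerivAt).comp_hasDerivAt t (hγderiv t)
  have hmono : MonotoneOn (θ n ∘ γ) (Icc (0 : ℝ) 1) := by
    apply monotoneOn_of_deriv_nonneg (convex_Icc 0 1)
    · exact fun t ht => (hg t ht).continuousAt.continuousWithinAt
    · intro t ht
      rw [interior_Icc] at ht
      exact (hg t ⟨ht.1.le, ht.2.le⟩).differentiableAt.differentiableWithinAt
    · intro t ht
      rw [interior_Icc] at ht
      rw [(hg t ⟨ht.1.le, ht.2.le⟩).deriv]
      exact hDnonneg t ⟨ht.1.le, ht.2.le⟩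
  have h01 : (θ n ∘ γ) 0 ≤ (θ n ∘ γ) 1 :=
    hmono ⟨le_refl 0, zero_le_one⟩ ⟨zero_le_one, le_refl 1⟩ zero_le_one
  have hγ0 : γ 0 = (pstar + ε, qstar - r) := by
    simp [hγdef]
  have hγ1 : γ 1 = (pstar - ε, qstar + r) := by
    simp only [hγdef, hvdef, one_smul, Prod.mk_add_mk, Prod.mk.injEq]
    exact ⟨by ring, by ring⟩
  simpa [Function.comp, hγ0, hγ1] using h01
end

section
/- Let ι be a finite type and let A be an increasing event in (ι → Bool), i.e. a set of configurations such that ω ∈ A and ω ≤ ω' coordinatewise (with false ≤ true) imply ω' ∈ A. For p ∈ [0,1] let μ_p denote the product probability measure on ι → Bool under which the coordinates are independent and each equals true with probability p. For i ∈ ι and a configuration ω, say i is pivotal for A at ω if the configuration agreeing with ω off i and equal to true at i lies in A while the configuration agreeing with ω off i and equal to false at i does not. Then for every p ∈ (0,1), the function p ↦ μ_p(A) is differentiable at p with derivative equal to Σ_{i ∈ ι} μ_p({ω : i is pivotal for A at ω}). -/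
/-!
On finitely many coordinates `μ_t(A) = ∑_{ω ∈ A} ∏ᵢ (t or 1 - t)` is a polynomial in `t`, and
the product rule splits its derivative into one term per coordinate `i`. Grouping the
configurations into pairs `{ω⁰, ω¹}` that differ only at `i` (with `ωᵇ i = b`), the `i`-th term
becomes `∑ (𝟙[ω¹ ∈ A] - 𝟙[ω⁰ ∈ A]) · w_i(ω)` over the pairs, where `w_i` is the weight of the
coordinates other than `i`. Since `A` is increasing, the bracket is the indicator that `i` is
pivotal, and because the weights `t` and `1 - t` of the two members of a pair add up to `1`,
that sum is `μ_t(i is pivotal)`.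
-/

open MeasureTheory Set

/-- The Bernoulli measure on `Bool` giving mass `p` to `true` and `1 - p` to `false`. -/
noncomputable def bernoulliMeasure (p : ℝ) : Measure Bool :=
  ENNReal.ofReal p • Measure.dirac true + ENNReal.ofReal (1 - p) • Measure.dirac false

/-- The product Bernoulli measure on configurations `ι → Bool`: coordinates are
independent and each equals `true` with probability `p`. -/
noncomputable def productBernoulli (ι : Type*) [Fintype ι] (p : ℝ) :
    Measure (ι → Bool) :=
  Measure.pi fun _ => bernoulliMeasure p

/-- `i` is pivotal for the event `A` at the configuration `ω` if switching
coordinate `i` to `true` puts the configuration in `A` while switching it to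
`false` takes it out of `A`. -/
def IsPivotal {ι : Type*} [DecidableEq ι] (A : Set (ι → Bool)) (i : ι) (ω : ι → Bool) : Prop :=
  Function.update ω i true ∈ A ∧ Function.update ω i false ∉ A

open Function

section

variable {ι : Type*} [Fintype ι]

def bernoulliWeight (t : ℝ) (ω : ι → Bool) : ℝ :=
  ∏ i, cond (ω i) t (1 - t)

def bernoulliWeightOff [DecidableEq ι] (i : ι) (t : ℝ) (ω : ι → Bool) : ℝ :=
  ∏ j ∈ Finset.univ.erase i, cond (ω j) t (1 - t)

instance (t : ℝ) : IsFiniteMeasure (bernoulliMeasure t) := by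
  constructor
  simp [bernoulliMeasure]

instance (t : ℝ) : IsFiniteMeasure (productBernoulli ι t) := by
  unfold productBernoulli
  infer_instance

lemma bernoulliMeasure_singleton (t : ℝ) (b : Bool) :
    bernoulliMeasure t {b} = ENNReal.ofReal (cond b t (1 - t)) := by
  cases b <;> simp [bernoulliMeasure]

lemma bernoulliWeight_nonneg {t : ℝ} (ht : t ∈ Icc (0 : ℝ) 1) (ω : ι → Bool) :
    0 ≤ bernoulliWeight t ω :=
  Finset.prod_nonneg fun i _ => by cases ω i <;> simp [ht.1, ht.2]

lemma productBernoulli_singleton {t : ℝ} (ht : t ∈ Icc (0 : ℝ) 1) (ω : ι → Bool) :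
    productBernoulli ι t {ω} = ENNReal.ofReal (bernoulliWeight t ω) := by
  rw [productBernoulli, Measure.pi_singleton, bernoulliWeight, ENNReal.ofReal_prod_of_nonneg]
  · simp_rw [bernoulliMeasure_singleton]
  · intro i _
    cases ω i <;> simp [ht.1, ht.2]

lemma productBernoulli_toReal [DecidableEq ι] {t : ℝ} (ht : t ∈ Icc (0 : ℝ) 1)
    (B : Set (ι → Bool)) [DecidablePred (· ∈ B)] :
    (productBernoulli ι t B).toReal = ∑ ω with ω ∈ B, bernoulliWeight t ω := by
  have hB : ((Finset.univ.filter (· ∈ B) : Finset (ι → Bool)) : Set (ι → Bool)) = B := by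
    ext; simp
  conv_lhs => rw [← hB, ← sum_measure_singleton]
  rw [ENNReal.toReal_sum fun ω _ => measure_ne_top _ _]
  refine Finset.sum_congr rfl fun ω _ => ?_
  rw [productBernoulli_singleton ht, ENNReal.toReal_ofReal (bernoulliWeight_nonneg ht ω)]

variable [DecidableEq ι]

lemma hasDerivAt_bernoulliWeight (ω : ι → Bool) (p : ℝ) :
    HasDerivAt (bernoulliWeight · ω) (∑ i, bernoulliWeightOff i p ω * cond (ω i) 1 (-1)) p := by
  refine HasDerivAt.fun_finsetProd fun i _ => ?_
  cases ω i
  · simpa using (hasDerivAt_id p).const_sub 1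
  · exact hasDerivAt_id p

lemma bernoulliWeight_eq_mul_bernoulliWeightOff (i : ι) (t : ℝ) (ω : ι → Bool) :
    bernoulliWeight t ω = cond (ω i) t (1 - t) * bernoulliWeightOff i t ω :=
  (Finset.mul_prod_erase _ _ (Finset.mem_univ i)).symm

lemma bernoulliWeightOff_update (i : ι) (t : ℝ) (ω : ι → Bool) (b : Bool) :
    bernoulliWeightOff i t (update ω i b) = bernoulliWeightOff i t ω :=
  Finset.prod_congr rfl fun j hj => by rw [update_of_ne (Finset.ne_of_mem_erase hj)]

lemma Fintype.sum_eq_sum_update_true_add_update_false {M : Type*} [AddCommMonoid M] (i : ι)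
    (g : (ι → Bool) → M) :
    ∑ ω, g ω = ∑ ω with ω i = true, (g (update ω i true) + g (update ω i false)) := by
  rw [Finset.sum_add_distrib, ← Finset.sum_filter_add_sum_filter_not _ (fun ω => ω i = true)]
  congr 1
  · refine Finset.sum_congr rfl fun ω hω => ?_
    rw [← (Finset.mem_filter.1 hω).2, update_eq_self]
  · refine Finset.sum_nbij' (update · i true) (update · i false) ?_ ?_ ?_ ?_ ?_ <;>
      intro ω hω <;> simp only [Finset.mem_filter, Finset.mem_univ, true_and] at hω
    · simp
    · simp
    · rw [update_idem, ← Bool.eq_false_iff.2 hω, update_eq_self]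
    · rw [update_idem, ← hω, update_eq_self]
    · rw [update_idem, ← Bool.eq_false_iff.2 hω, update_eq_self]

omit [Fintype ι] in
lemma isPivotal_update (A : Set (ι → Bool)) (i : ι) (ω : ι → Bool) (b : Bool) :
    IsPivotal A i (update ω i b) ↔ IsPivotal A i ω := by
  simp only [IsPivotal, update_idem]

omit [Fintype ι] in
lemma IsUpperSet.update_true_mem {A : Set (ι → Bool)} (hA : IsUpperSet A) {ω : ι → Bool}
    {i : ι} (h : update ω i false ∈ A) : update ω i true ∈ A :=
  hA (update_le_update_iff'.2 (Bool.false_le true)) h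

lemma sum_bernoulliWeightOff_mul_sign_eq_sum_isPivotal {A : Set (ι → Bool)} (hA : IsUpperSet A)
    (i : ι) (p : ℝ) [DecidablePred (· ∈ A)] [DecidablePred (IsPivotal A i)] :
    ∑ ω with ω ∈ A, bernoulliWeightOff i p ω * cond (ω i) 1 (-1)
      = ∑ ω with IsPivotal A i ω, bernoulliWeight p ω := by
  rw [Finset.sum_filter, Finset.sum_filter, Fintype.sum_eq_sum_update_true_add_update_false i,
    Fintype.sum_eq_sum_update_true_add_update_false i]
  refine Finset.sum_congr rfl fun ω _ => ?_
  simp only [isPivotal_update, bernoulliWeight_eq_mul_bernoulliWeightOff i,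
    bernoulliWeightOff_update, update_self]
  by_cases h₁ : update ω i true ∈ A
  · by_cases h₀ : update ω i false ∈ A
    · simp [IsPivotal, h₁, h₀]
    · simp only [IsPivotal, h₁, h₀, not_false_eq_true, and_self, ↓reduceIte, cond_true,
        cond_false, mul_one, add_zero]
      ring
  · have h₀ : update ω i false ∉ A := mt hA.update_true_mem h₁
    simp [IsPivotal, h₁, h₀]

end

/-- Margulis–Russo formula: for an increasing event `A` on finitely many independent
Bernoulli variables, `p ↦ μ_p(A)` is differentiable on `(0,1)` with derivative the sum
over coordinates of the probability that the coordinate is pivotal for `A`. -/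
theorem stmt_7 (ι : Type*) [Fintype ι] [DecidableEq ι] (A : Set (ι → Bool))
    (hA : ∀ ω ∈ A, ∀ ω' : ι → Bool, (∀ i, ω i ≤ ω' i) → ω' ∈ A)
    (p : ℝ) (hp : p ∈ Ioo (0 : ℝ) 1) :
    HasDerivAt (fun t => (productBernoulli ι t A).toReal)
      (∑ i : ι, (productBernoulli ι p {ω | IsPivotal A i ω}).toReal) p := by
  classical
  have hA' : IsUpperSet A := fun ω ω' h hω => hA ω hω ω' h
  have hderiv : ∑ i, (productBernoulli ι p {ω | IsPivotal A i ω}).toReal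
      = ∑ ω with ω ∈ A, ∑ i, bernoulliWeightOff i p ω * cond (ω i) 1 (-1) := by
    simp_rw [productBernoulli_toReal (Ioo_subset_Icc_self hp), Set.mem_ofPred_eq,
      ← sum_bernoulliWeightOff_mul_sign_eq_sum_isPivotal hA']
    exact Finset.sum_comm
  rw [hderiv]
  refine (HasDerivAt.fun_sum fun ω _ => hasDerivAt_bernoulliWeight ω p).congr_of_eventuallyEq ?_
  filter_upwards [Ioo_mem_nhds hp.1 hp.2] with t ht
  exact productBernoulli_toReal (Ioo_subset_Icc_self ht) A
end
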